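/- Let p ≥ 1 and let [a_1,b_1], …, [a_p,b_p] be mutually disjoint closed real intervals with a_i < b_i. For each i let ρ_i : [a_i,b_i] → ℂ be integrable and set f_i(z) := (1/(2πi)) ∫_{a_i}^{b_i} ρ_i(x)/(x − z) dx for z ∈ ℂ∖[a_i,b_i]. Let n = (n_1,…,n_p) ∈ ℕ^p and let Q be a polynomial such that ∫_{a_i}^{b_i} Q(x)·x^k·ρ_i(x) dx = 0 for each i and each 0 ≤ k ≤ n_i − 1. Define R_i(z) := (1/(2πi)) ∫_{a_i}^{b_i} Q(x)·ρ_i(x)/(x − z) dx for z ∈ ℂ∖[a_i,b_i]. Then for each i: (1) z^{n_i+1}·R_i(z) remains bounded as z → ∞; and (2) there exists a polynomial P_i such that R_i(z) = Q(z)·f_i(z) − P_i(z) for all z ∈ ℂ∖[a_i,b_i]. -/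

import Mathlib

/-!
Write `𝒞 g` for the Cauchy transform of a density `g` on `[a, b]`. Since
`x / (x - z) = 1 + z / (x - z)`, multiplying the density by `x` gives
`𝒞 (x g) = z · 𝒞 g + (2πi)⁻¹ ∫ g`. Iterating, the vanishing of the first `n` moments of `Qρ`
gives `z ^ n · 𝒞 (Qρ) = 𝒞 (x ^ n Qρ)`, and `z · 𝒞 h` stays bounded at infinity for every
integrable `h`. The same identity, propagated by induction over the monomials of `Q`, shows
that `Q(z) · 𝒞 ρ - 𝒞 (Qρ)` is a polynomial in `z`.
-/

open Complex Filter Topology MeasureTheory intervalIntegral Polynomial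

noncomputable def cauchyTransform (a b : ℝ) (g : ℝ → ℂ) (z : ℂ) : ℂ :=
  (2 * (Real.pi : ℂ) * Complex.I)⁻¹ * ∫ x in a..b, g x / ((x : ℂ) - z)

section CauchyTransform

variable {a b : ℝ} {g : ℝ → ℂ} {z : ℂ}

lemma ofReal_sub_ne_zero_of_notMem_image_uIcc (hz : z ∉ ofReal '' Set.uIcc a b) {x : ℝ}
    (hx : x ∈ Set.uIcc a b) : (x : ℂ) - z ≠ 0 :=
  sub_ne_zero.2 fun h => hz ⟨x, hx, h⟩

lemma eventually_notMem_image_uIcc_cobounded :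
    ∀ᶠ z in Bornology.cobounded ℂ, z ∉ ofReal '' Set.uIcc a b :=
  (isCompact_uIcc.image continuous_ofReal).isBounded

lemma IntervalIntegrable.div_ofReal_sub (hg : IntervalIntegrable g volume a b)
    (hz : z ∉ ofReal '' Set.uIcc a b) :
    IntervalIntegrable (fun x => g x / ((x : ℂ) - z)) volume a b := by
  simp_rw [div_eq_mul_inv]
  exact hg.mul_continuousOn <| (continuous_ofReal.sub continuous_const).continuousOn.inv₀
    fun _ hx => ofReal_sub_ne_zero_of_notMem_image_uIcc hz hx

lemma IntervalIntegrable.polynomial_eval_mul (hg : IntervalIntegrable g volume a b)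
    (Q : ℂ[X]) : IntervalIntegrable (fun x => Q.eval (x : ℂ) * g x) volume a b :=
  hg.continuousOn_mul (Q.continuous.comp continuous_ofReal).continuousOn

lemma cauchyTransform_const_mul (c : ℂ) :
    cauchyTransform a b (fun x => c * g x) z = c * cauchyTransform a b g z := by
  simp only [cauchyTransform, mul_div_assoc, intervalIntegral.integral_const_mul]
  ring

lemma cauchyTransform_add {g₁ g₂ : ℝ → ℂ} (hg₁ : IntervalIntegrable g₁ volume a b)
    (hg₂ : IntervalIntegrable g₂ volume a b) (hz : z ∉ ofReal '' Set.uIcc a b) :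
    cauchyTransform a b (fun x => g₁ x + g₂ x) z =
      cauchyTransform a b g₁ z + cauchyTransform a b g₂ z := by
  simp only [cauchyTransform, add_div,
    integral_add (hg₁.div_ofReal_sub hz) (hg₂.div_ofReal_sub hz), mul_add]

lemma cauchyTransform_ofReal_mul (hg : IntervalIntegrable g volume a b)
    (hz : z ∉ ofReal '' Set.uIcc a b) :
    cauchyTransform a b (fun x => (x : ℂ) * g x) z =
      z * cauchyTransform a b g z + (2 * (Real.pi : ℂ) * Complex.I)⁻¹ * ∫ x in a..b, g x := by
  have hsplit : ∀ x ∈ Set.uIcc a b,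
      (x : ℂ) * g x / ((x : ℂ) - z) = g x + z * (g x / ((x : ℂ) - z)) := by
    intro x hx
    field_simp [ofReal_sub_ne_zero_of_notMem_image_uIcc hz hx]
    ring
  rw [cauchyTransform, cauchyTransform, integral_congr hsplit,
    integral_add hg ((hg.div_ofReal_sub hz).const_mul z), intervalIntegral.integral_const_mul]
  ring

lemma cauchyTransform_pow_mul_of_moments_eq_zero {n : ℕ} (hg : IntervalIntegrable g volume a b)
    (hz : z ∉ ofReal '' Set.uIcc a b) (hmom : ∀ k < n, ∫ x in a..b, (x : ℂ) ^ k * g x = 0) :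
    cauchyTransform a b (fun x => (x : ℂ) ^ n * g x) z = z ^ n * cauchyTransform a b g z := by
  induction n with
  | zero => simp
  | succ n ih =>
    have hgn : IntervalIntegrable (fun x => (x : ℂ) ^ n * g x) volume a b :=
      hg.continuousOn_mul (by fun_prop)
    calc cauchyTransform a b (fun x => (x : ℂ) ^ (n + 1) * g x) z
        = cauchyTransform a b (fun x => (x : ℂ) * ((x : ℂ) ^ n * g x)) z := by
          simp only [pow_succ', mul_assoc]
      _ = z ^ (n + 1) * cauchyTransform a b g z := by
          rw [cauchyTransform_ofReal_mul hgn hz, hmom n n.lt_succ_self,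
            ih fun k hk => hmom k (hk.trans n.lt_succ_self)]
          ring

lemma exists_eventually_norm_mul_cauchyTransform_le (hg : IntervalIntegrable g volume a b) :
    ∃ C : ℝ, ∀ᶠ z in Bornology.cobounded ℂ, ‖z * cauchyTransform a b g z‖ ≤ C := by
  obtain ⟨M, hM⟩ := (isCompact_uIcc.image continuous_ofReal).isBounded.exists_norm_le
  refine ⟨‖(2 * (Real.pi : ℂ) * Complex.I)⁻¹‖ * |∫ x in a..b, 2 * ‖g x‖|, ?_⟩
  filter_upwards [tendsto_norm_cobounded_atTop.eventually_ge_atTop (2 * M + 1)] with z hz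
  have hkernel : ∀ x ∈ Set.uIcc a b, ‖z / ((x : ℂ) - z)‖ ≤ 2 := by
    intro x hx
    have hxM : ‖(x : ℂ)‖ ≤ M := hM _ ⟨x, hx, rfl⟩
    have hdist : ‖z‖ - ‖(x : ℂ)‖ ≤ ‖(x : ℂ) - z‖ :=
      norm_sub_rev z (x : ℂ) ▸ norm_sub_norm_le _ _
    have hx0 := norm_nonneg (x : ℂ)
    rw [norm_div, div_le_iff₀ (by linarith)]
    linarith
  rw [cauchyTransform, mul_left_comm, norm_mul, ← intervalIntegral.integral_const_mul]
  gcongr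
  refine norm_integral_le_abs_of_norm_le ?_ (hg.norm.const_mul 2)
  refine ae_restrict_of_forall_mem measurableSet_uIoc fun x hx => ?_
  calc ‖z * (g x / ((x : ℂ) - z))‖ = ‖z / ((x : ℂ) - z)‖ * ‖g x‖ := by
        rw [← norm_mul]; ring_nf
    _ ≤ 2 * ‖g x‖ := by gcongr; exact hkernel x (Set.uIoc_subset_uIcc hx)

lemma exists_polynomial_cauchyTransform_eval_mul (hg : IntervalIntegrable g volume a b)
    (Q : ℂ[X]) : ∃ P : ℂ[X], ∀ z ∉ ofReal '' Set.uIcc a b,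
      cauchyTransform a b (fun x => Q.eval (x : ℂ) * g x) z =
        Q.eval z * cauchyTransform a b g z - P.eval z := by
  induction Q using Polynomial.induction_on with
  | C c => exact ⟨0, fun z _ => by simp [cauchyTransform_const_mul]⟩
  | add p q hp hq =>
    obtain ⟨P, hP⟩ := hp
    obtain ⟨P', hP'⟩ := hq
    refine ⟨P + P', fun z hz => ?_⟩
    simp only [eval_add, add_mul]
    rw [cauchyTransform_add (hg.polynomial_eval_mul p) (hg.polynomial_eval_mul q) hz,
      hP z hz, hP' z hz]
    ring
  | monomial n c ih =>
    obtain ⟨P, hP⟩ := ih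
    have hmono : IntervalIntegrable
        (fun x => (C c * X ^ n : ℂ[X]).eval (x : ℂ) * g x) volume a b :=
      hg.polynomial_eval_mul _
    refine ⟨X * P - C ((2 * (Real.pi : ℂ) * Complex.I)⁻¹ *
      ∫ x in a..b, (C c * X ^ n : ℂ[X]).eval (x : ℂ) * g x), fun z hz => ?_⟩
    have hshift : (fun x : ℝ => (C c * X ^ (n + 1) : ℂ[X]).eval (x : ℂ) * g x) =
        fun x : ℝ => (x : ℂ) * ((C c * X ^ n : ℂ[X]).eval (x : ℂ) * g x) := by
      ext x
      simp only [eval_mul, eval_C, eval_pow, eval_X]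
      ring
    rw [hshift, cauchyTransform_ofReal_mul hmono hz, hP z hz]
    simp only [eval_mul, eval_sub, eval_C, eval_pow, eval_X]
    ring

end CauchyTransform

theorem orthogonality_implies_hermitePade_general (p : ℕ)
    (a b : Fin p → ℝ) (hab : ∀ i, a i < b i)
    (ρ : Fin p → ℝ → ℂ)
    (hρ : ∀ i, IntervalIntegrable (ρ i) volume (a i) (b i))
    (f : Fin p → ℂ → ℂ)
    (hf : ∀ i, ∀ z : ℂ, z ∉ Complex.ofReal '' Set.Icc (a i) (b i) →
      f i z = (2 * (Real.pi : ℂ) * Complex.I)⁻¹ * ∫ x in (a i)..(b i), ρ i x / ((x : ℂ) - z))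
    (n : Fin p → ℕ)
    (Q : Polynomial ℂ)
    (horth : ∀ i, ∀ k : ℕ, k < n i →
      (∫ x in (a i)..(b i), Q.eval (x : ℂ) * (x : ℂ) ^ k * ρ i x) = 0)
    (R : Fin p → ℂ → ℂ)
    (hR : ∀ i, ∀ z : ℂ, z ∉ Complex.ofReal '' Set.Icc (a i) (b i) →
      R i z = (2 * (Real.pi : ℂ) * Complex.I)⁻¹ *
        ∫ x in (a i)..(b i), Q.eval (x : ℂ) * ρ i x / ((x : ℂ) - z)) :
    ∀ i,
      (∃ C : ℝ, ∀ᶠ z in Bornology.cobounded ℂ, ‖z ^ (n i + 1) * R i z‖ ≤ C) ∧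
      (∃ P : Polynomial ℂ, ∀ z : ℂ, z ∉ Complex.ofReal '' Set.Icc (a i) (b i) →
        R i z = Q.eval z * f i z - P.eval z) := by
  intro i
  have hIcc : Set.uIcc (a i) (b i) = Set.Icc (a i) (b i) := Set.uIcc_of_le (hab i).le
  have hQρ := (hρ i).polynomial_eval_mul Q
  have hmom : ∀ k < n i, ∫ x in a i..b i, (x : ℂ) ^ k * (Q.eval (x : ℂ) * ρ i x) = 0 := by
    intro k hk
    rw [← horth i k hk]
    congr 1 with x
    ring
  refine ⟨?_, ?_⟩
  · obtain ⟨C, hC⟩ := exists_eventually_norm_mul_cauchyTransform_le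
      (hQρ.continuousOn_mul (by fun_prop) :
        IntervalIntegrable (fun x => (x : ℂ) ^ n i * (Q.eval (x : ℂ) * ρ i x)) volume _ _)
    refine ⟨C, ?_⟩
    filter_upwards [hC, eventually_notMem_image_uIcc_cobounded] with z hzC hz
    have hRz : R i z = cauchyTransform (a i) (b i) (fun x => Q.eval (x : ℂ) * ρ i x) z :=
      hR i z (hIcc ▸ hz)
    rwa [hRz, pow_succ', mul_assoc,
      ← cauchyTransform_pow_mul_of_moments_eq_zero hQρ hz hmom]
  · obtain ⟨P, hP⟩ := exists_polynomial_cauchyTransform_eval_mul (hρ i) Q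
    refine ⟨P, fun z hz => ?_⟩
    rw [hR i z hz, hf i z hz]
    exact hP z (hIcc ▸ hz)

/-- Conversely, multiple orthogonality of `Q` implies the Hermite–Padé
interpolation conditions: the remainders `R_i` decay like `z^{-(n_i+1)}` at infinity and
agree with `Q·f_i − P_i` for suitable polynomials `P_i`. -/
theorem orthogonality_implies_hermitePade (p : ℕ) (hp : 1 ≤ p)
    (a b : Fin p → ℝ) (hab : ∀ i, a i < b i)
    (hdisj : ∀ i j, i ≠ j → Disjoint (Set.Icc (a i) (b i)) (Set.Icc (a j) (b j)))
    (ρ : Fin p → ℝ → ℂ)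
    (hρ : ∀ i, IntervalIntegrable (ρ i) volume (a i) (b i))
    (f : Fin p → ℂ → ℂ)
    (hf : ∀ i, ∀ z : ℂ, z ∉ Complex.ofReal '' Set.Icc (a i) (b i) →
      f i z = (2 * (Real.pi : ℂ) * Complex.I)⁻¹ * ∫ x in (a i)..(b i), ρ i x / ((x : ℂ) - z))
    (n : Fin p → ℕ)
    (Q : Polynomial ℂ)
    (horth : ∀ i, ∀ k : ℕ, k < n i →
      (∫ x in (a i)..(b i), Q.eval (x : ℂ) * (x : ℂ) ^ k * ρ i x) = 0)
    (R : Fin p → ℂ → ℂ)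
    (hR : ∀ i, ∀ z : ℂ, z ∉ Complex.ofReal '' Set.Icc (a i) (b i) →
      R i z = (2 * (Real.pi : ℂ) * Complex.I)⁻¹ *
        ∫ x in (a i)..(b i), Q.eval (x : ℂ) * ρ i x / ((x : ℂ) - z)) :
    ∀ i,
      (∃ C : ℝ, ∀ᶠ z in Bornology.cobounded ℂ, ‖z ^ (n i + 1) * R i z‖ ≤ C) ∧
      (∃ P : Polynomial ℂ, ∀ z : ℂ, z ∉ Complex.ofReal '' Set.Icc (a i) (b i) →
        R i z = Q.eval z * f i z - P.eval z) :=
  orthogonality_implies_hermitePade_general p a b hab ρ hρ f hf n Q horth R hR
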